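/- arXiv:1411.3672 — 5 statements merged into one kernel-verified Lean document; each statement's English description precedes it below -/
import Mathlib

section
/- For every γ > 0, the function f is strictly monotonically increasing on the interval (0, π/(2γ)) and maps this interval bijectively onto (0, ∞). -/
/-!
With `x = λ₀γ`, `f(λ₀) = (γ/2)(sec² x − tan x / x) = (γ/2)(1 − sinc 2x) / cos² x`.
On `[0, π/2)` the numerator is nonnegative and increasing, since `sinc` is decreasing on `[0, π]`
(its values are secant slopes of the concave function `sin` through `0`), and `1 / cos² x` is
positive and increasing. Hence the product is strictly increasing, vanishes at `0` and tends to
`+∞` at `π/2`, so by continuity it maps `(0, π/2)` onto `(0, ∞)`.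
-/

open Real Set Filter Topology

theorem Real.sinc_strictAntiOn : StrictAntiOn sinc (Icc 0 π) := by
  intro x hx y hy hxy
  have hy0 : y ≠ 0 := (hx.1.trans_lt hxy).ne'
  rw [sinc_of_ne_zero hy0]
  rcases hx.1.eq_or_lt with rfl | hx0
  · rw [sinc_zero, div_lt_one (hx.1.trans_lt hxy)]
    exact sin_lt (hx.1.trans_lt hxy)
  · have := strictConcaveOn_sin_Icc.secant_strict_mono (a := 0) ⟨le_rfl, pi_pos.le⟩ hx hy
      hx0.ne' hy0 hxy
    simpa [sinc_of_ne_zero hx0.ne'] using this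

theorem surjOn_Ioo_Ioi_of_continuousOn_Ico {α δ : Type*} [ConditionallyCompleteLinearOrder α]
    [TopologicalSpace α] [OrderTopology α] [DenselyOrdered α] [LinearOrder δ] [TopologicalSpace δ]
    [OrderClosedTopology δ] [NoMaxOrder δ] {g : α → δ} {a b : α} (hab : a < b)
    (hg : ContinuousOn g (Ico a b)) (hgb : Tendsto g (𝓝[<] b) atTop) :
    SurjOn g (Ioo a b) (Ioi (g a)) := by
  intro y hy
  have := nhdsLT_neBot_of_exists_lt ⟨a, hab⟩
  obtain ⟨c, hc, hyc⟩ :=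
    (Filter.Eventually.and (Ioo_mem_nhdsLT hab) (hgb.eventually_gt_atTop y)).exists
  obtain ⟨x, hx, rfl⟩ := intermediate_value_Icc hc.1.le (hg.mono (Icc_subset_Ico_right hc.2))
    ⟨le_of_lt hy, hyc.le⟩
  refine ⟨x, ⟨lt_of_le_of_ne hx.1 ?_, hx.2.trans_lt hc.2⟩, rfl⟩
  rintro rfl
  exact lt_irrefl _ hy

noncomputable def secSqSubTanDiv (x : ℝ) : ℝ := (1 - sinc (2 * x)) / cos x ^ 2

theorem secSqSubTanDiv_zero : secSqSubTanDiv 0 = 0 := by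
  simp [secSqSubTanDiv]

theorem secSqSubTanDiv_strictMonoOn : StrictMonoOn secSqSubTanDiv (Ico 0 (π / 2)) := by
  intro x hx y hy hxy
  have hcos_pos : 0 < cos y := cos_pos_of_mem_Ioo ⟨by linarith [pi_pos, hy.1], hy.2⟩
  have hsinc : sinc (2 * y) < sinc (2 * x) :=
    sinc_strictAntiOn ⟨by linarith [hx.1], by linarith [hx.2]⟩
      ⟨by linarith [hy.1], by linarith [hy.2]⟩ (by linarith)
  have hcos : cos y < cos x :=
    strictAntiOn_cos ⟨hx.1, by linarith [hx.2, pi_pos]⟩ ⟨hy.1, by linarith [hy.2, pi_pos]⟩ hxy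
  unfold secSqSubTanDiv
  gcongr
  · linarith [sinc_le_one (2 * x)]

theorem continuousOn_secSqSubTanDiv : ContinuousOn secSqSubTanDiv (Ioo (-(π / 2)) (π / 2)) := by
  unfold secSqSubTanDiv
  refine ContinuousOn.div (by fun_prop) (by fun_prop) fun x hx => ?_
  exact pow_ne_zero 2 (cos_pos_of_mem_Ioo hx).ne'

theorem tendsto_secSqSubTanDiv_pi_div_two : Tendsto secSqSubTanDiv (𝓝[<] (π / 2)) atTop := by
  have hnum : Tendsto (fun x => 1 - sinc (2 * x)) (𝓝[<] (π / 2)) (𝓝 1) := by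
    have : Tendsto (fun x => 1 - sinc (2 * x)) (𝓝 (π / 2)) (𝓝 (1 - sinc (2 * (π / 2)))) :=
      (continuous_const.sub (continuous_sinc.comp (continuous_const.mul continuous_id))).tendsto _
    rw [mul_div_cancel₀ _ two_ne_zero, sinc_of_ne_zero pi_ne_zero, sin_pi, zero_div, sub_zero]
      at this
    exact this.mono_left nhdsWithin_le_nhds
  have hsec : Tendsto (fun x => (cos x)⁻¹ ^ 2) (𝓝[<] (π / 2)) atTop :=
    (tendsto_pow_atTop two_ne_zero).comp tendsto_cos_pi_div_two.inv_tendsto_nhdsGT_zero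
  refine (hnum.pos_mul_atTop one_pos hsec).congr fun x => ?_
  rw [secSqSubTanDiv, inv_pow, div_eq_mul_inv]

theorem bijOn_secSqSubTanDiv : BijOn secSqSubTanDiv (Ioo 0 (π / 2)) (Ioi 0) := by
  refine ⟨fun x hx => ?_, (secSqSubTanDiv_strictMonoOn.mono Ioo_subset_Ico_self).injOn, ?_⟩
  · rw [mem_Ioi, ← secSqSubTanDiv_zero]
    exact secSqSubTanDiv_strictMonoOn ⟨le_rfl, by linarith [pi_pos]⟩ (Ioo_subset_Ico_self hx) hx.1
  · have h := surjOn_Ioo_Ioi_of_continuousOn_Ico (by positivity)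
      (continuousOn_secSqSubTanDiv.mono (Ico_subset_Ioo_left (by linarith [pi_pos])))
      tendsto_secSqSubTanDiv_pi_div_two
    rwa [secSqSubTanDiv_zero] at h

theorem half_mul_sub_eq_mul_secSqSubTanDiv {l γ : ℝ} (h : l * γ ≠ 0) :
    (1 / 2) * (γ / cos (l * γ) ^ 2 - sin (l * γ) / (l * cos (l * γ))) =
      γ / 2 * secSqSubTanDiv (l * γ) := by
  have hl : l ≠ 0 := left_ne_zero_of_mul h
  have hγ : γ ≠ 0 := right_ne_zero_of_mul h
  rw [secSqSubTanDiv, sinc_of_ne_zero (mul_ne_zero two_ne_zero h), sin_two_mul]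
  rcases eq_or_ne (cos (l * γ)) 0 with hc | hc
  · simp [hc]
  · field_simp

/-- For every `γ > 0`, the function
`f(λ₀) = (1/2)·(γ/cos²(λ₀γ) − sin(λ₀γ)/(λ₀·cos(λ₀γ)))`
is strictly monotonically increasing on `(0, π/(2γ))` and maps this
interval bijectively onto `(0, ∞)`. -/
theorem stmt_0 (γ : ℝ) (hγ : 0 < γ)
    (f : ℝ → ℝ)
    (hf : ∀ l : ℝ, f l = (1/2) * (γ / (Real.cos (l * γ))^2
      - Real.sin (l * γ) / (l * Real.cos (l * γ)))) :
    StrictMonoOn f (Ioo 0 (π / (2 * γ))) ∧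
      BijOn f (Ioo 0 (π / (2 * γ))) (Ioi 0) := by
  have hc : π / (2 * γ) * γ = π / 2 := by field_simp
  have hscale : BijOn (· * γ) (Ioo 0 (π / (2 * γ))) (Ioo 0 (π / 2)) := by
    simpa [image_mul_right_Ioo _ _ hγ, hc] using
      (mul_left_injective₀ hγ.ne').injOn.bijOn_image (s := Ioo 0 (π / (2 * γ)))
  have hhalf : BijOn (γ / 2 * ·) (Ioi 0) (Ioi 0) := by
    simpa [image_const_mul_Ioi_zero (half_pos hγ)] using
      (mul_right_injective₀ (half_pos hγ).ne').injOn.bijOn_image (s := Ioi (0 : ℝ))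
  have hf_eq : EqOn (fun l => γ / 2 * secSqSubTanDiv (l * γ)) f (Ioo 0 (π / (2 * γ))) :=
    fun l hl => by rw [hf, half_mul_sub_eq_mul_secSqSubTanDiv (mul_pos hl.1 hγ).ne']
  have hmono : StrictMonoOn (fun l => γ / 2 * secSqSubTanDiv (l * γ)) (Ioo 0 (π / (2 * γ))) :=
    fun a ha b hb hab => mul_lt_mul_of_pos_left
      ((secSqSubTanDiv_strictMonoOn.mono Ioo_subset_Ico_self) (hscale.mapsTo ha)
        (hscale.mapsTo hb) (mul_lt_mul_of_pos_right hab hγ)) (half_pos hγ)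
  exact ⟨hmono.congr hf_eq, ((hhalf.comp bijOn_secSqSubTanDiv).comp hscale).congr hf_eq⟩
end

section
/- For every γ > 0, the function f is strictly monotonically increasing on the interval (0, π/(2γ)); equivalently, for all λ₀, μ₀ with 0 < λ₀ < μ₀ < π/(2γ), f(λ₀) < f(μ₀). -/
/-!
Substituting `x = λ₀γ` gives `f(λ₀) = (γ/2)·profile(x)` with
`profile x = 1/cos² x − sin x/(x cos x)`, so it suffices that `profile` is strictly increasing on
`(0, π/2)`. There `x² cos³ x · profile'(x) = sin x (2x² + cos² x) − x cos x`, and the classical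
bounds `x cos x < sin x < x` (i.e. `sin x < x < tan x`) give
`sin x (2x² + cos² x) − x cos x > x cos x (2x² + cos² x − 1) = x cos x (2x² − sin² x) > 0`.
-/

open Real Set

noncomputable def profile (x : ℝ) : ℝ := 1 / cos x ^ 2 - sin x / (x * cos x)

noncomputable def derivProfile (x : ℝ) : ℝ :=
  (sin x * (2 * x ^ 2 + cos x ^ 2) - x * cos x) / (x ^ 2 * cos x ^ 3)

lemma hasDerivAt_profile {x : ℝ} (hx : x ≠ 0) (hcos : cos x ≠ 0) :
    HasDerivAt profile (derivProfile x) x := by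
  have h : HasDerivAt (fun y => 1 / cos y ^ 2 - sin y / (y * cos y)) _ x :=
    ((hasDerivAt_const x 1).div ((hasDerivAt_cos x).pow 2) (pow_ne_zero 2 hcos)).sub
      ((hasDerivAt_sin x).div ((hasDerivAt_id' x).mul (hasDerivAt_cos x)) (mul_ne_zero hx hcos))
  convert h using 1
  · rfl
  · rw [derivProfile]
    norm_num
    field_simp
    linear_combination x * cos x * sin_sq_add_cos_sq x

lemma cos_pos_of_mem_Ioo_zero_pi_div_two {x : ℝ} (hx : x ∈ Ioo 0 (π / 2)) : 0 < cos x :=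
  cos_pos_of_mem_Ioo (Ioo_subset_Ioo_left (by linarith [pi_pos]) hx)

lemma mul_cos_lt_sin {x : ℝ} (hx : x ∈ Ioo 0 (π / 2)) : x * cos x < sin x := by
  have htan : x < sin x / cos x := tan_eq_sin_div_cos x ▸ lt_tan hx.1 hx.2
  rwa [lt_div_iff₀ (cos_pos_of_mem_Ioo_zero_pi_div_two hx)] at htan

lemma derivProfile_pos {x : ℝ} (hx : x ∈ Ioo 0 (π / 2)) : 0 < derivProfile x := by
  have hcos := cos_pos_of_mem_Ioo_zero_pi_div_two hx
  have hsin : 0 < sin x := sin_pos_of_pos_of_lt_pi hx.1 (by linarith [hx.2, pi_pos])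
  have hsin_sq_lt : sin x ^ 2 < 2 * x ^ 2 := by nlinarith [sin_lt hx.1]
  have hnum : 0 < sin x * (2 * x ^ 2 + cos x ^ 2) - x * cos x :=
    calc 0 < x * cos x * (2 * x ^ 2 - sin x ^ 2) := mul_pos (mul_pos hx.1 hcos) (by linarith)
      _ = x * cos x * (2 * x ^ 2 + cos x ^ 2) - x * cos x := by
          linear_combination (-(x * cos x)) * sin_sq_add_cos_sq x
      _ < sin x * (2 * x ^ 2 + cos x ^ 2) - x * cos x := by
          gcongr
          exact mul_cos_lt_sin hx
  exact div_pos hnum (by positivity [hx.1])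

lemma strictMonoOn_profile : StrictMonoOn profile (Ioo 0 (π / 2)) := by
  have hderiv : ∀ x ∈ Ioo 0 (π / 2), HasDerivAt profile (derivProfile x) x := fun x hx =>
    hasDerivAt_profile hx.1.ne' (cos_pos_of_mem_Ioo_zero_pi_div_two hx).ne'
  refine strictMonoOn_of_hasDerivWithinAt_pos (convex_Ioo 0 (π / 2)) (f' := derivProfile)
    (fun x hx => (hderiv x hx).continuousAt.continuousWithinAt) ?_ ?_ <;> rw [interior_Ioo]
  · exact fun x hx => (hderiv x hx).hasDerivWithinAt
  · exact fun x hx => derivProfile_pos hx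

/-- For every `γ > 0`, the function
`f(λ₀) = (1/2)·(γ/cos²(λ₀γ) − sin(λ₀γ)/(λ₀·cos(λ₀γ)))`
is strictly monotonically increasing on `(0, π/(2γ))`:
for all `λ₀, μ₀` with `0 < λ₀ < μ₀ < π/(2γ)`, `f(λ₀) < f(μ₀)`. -/
theorem stmt_1 (γ : ℝ) (hγ : 0 < γ)
    (f : ℝ → ℝ)
    (hf : ∀ l : ℝ, f l = (1/2) * (γ / (Real.cos (l * γ))^2
      - Real.sin (l * γ) / (l * Real.cos (l * γ)))) :
    ∀ l m : ℝ, 0 < l → l < m → m < π / (2 * γ) → f l < f m := by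
  intro l m hl hlm hm
  have hf_profile : ∀ t, f t = γ / 2 * profile (t * γ) := by
    intro t
    rw [hf, profile]
    field_simp
  have hlγ_pos : 0 < l * γ := mul_pos hl hγ
  have hlγ : l * γ < m * γ := mul_lt_mul_of_pos_right hlm hγ
  have hmγ : m * γ < π / 2 := by
    rw [lt_div_iff₀ (by positivity)] at hm
    linarith
  rw [hf_profile, hf_profile]
  gcongr
  exact strictMonoOn_profile ⟨hlγ_pos, hlγ.trans hmγ⟩ ⟨hlγ_pos.trans hlγ, hmγ⟩ hlγ
end

section
/- For every λ ∈ (0, π/2), one has 2·λ²·tan(λ) + sin(λ)·cos(λ) > λ. -/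
open Real Set

/-- For every `λ ∈ (0, π/2)`, `2·λ²·tan(λ) + sin(λ)·cos(λ) > λ`. -/
theorem stmt_4 (l : ℝ) (hl : l ∈ Ioo 0 (π / 2)) :
    2 * l ^ 2 * Real.tan l + Real.sin l * Real.cos l > l := by
  obtain ⟨h0, h1⟩ := hl
  have hc : 0 < Real.cos l := Real.cos_pos_of_mem_Ioo ⟨by linarith [Real.pi_pos], h1⟩
  have hs : 0 < Real.sin l := Real.sin_pos_of_pos_of_lt_pi h0 (by linarith [Real.pi_pos])
  have ht : l < Real.tan l := Real.lt_tan h0 h1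
  have hsl : Real.sin l < l := Real.sin_lt h0
  have hsc : l * Real.cos l < Real.sin l := by
    have := Real.tan_eq_sin_div_cos l
    rw [this] at ht
    calc l * Real.cos l < (Real.sin l / Real.cos l) * Real.cos l := by
          exact mul_lt_mul_of_pos_right ht hc
      _ = Real.sin l := by field_simp
  have hpyth : Real.sin l ^ 2 + Real.cos l ^ 2 = 1 := Real.sin_sq_add_cos_sq l
  nlinarith [mul_pos (mul_pos h0 h0) (sub_pos.2 ht), mul_lt_mul_of_pos_right hsc hc,
    mul_pos h0 h0, sq_nonneg (l - Real.sin l), mul_pos hs h0]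
end

section
/- For every real x with 0 < x < 1, the series ∑_{n=0}^∞ 1/((2n+1)² − x²)² converges and equals π²·sec²(πx/2)/(16·x²) − π·tan(πx/2)/(8·x³). -/
/-!
Parseval's identity for the `2π`-periodic extension of `t ↦ cos (y t)` from `[-π, π]`, whose
Fourier coefficients are `(-1)ⁿ sin (π y) y / (π (y² - n²))`, evaluates `∑_{n ∈ ℤ} 1 / (y² - n²)²`
for every non-integral `y`. The sum over odd `n` is the sum over all `n` minus the sum over even
`n`, which is the same series at `y = x / 2` divided by `16`; the half-angle formulas then turn
the result into the stated closed form.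
-/

open Real MeasureTheory

theorem HasSum.odd_of_even {E : Type*} [AddCommGroup E] [UniformSpace E] [IsUniformAddGroup E]
    [CompleteSpace E] [T2Space E] {f : ℕ → E} {a b : E} (hf : HasSum f a) (he : HasSum (fun k => f (2 * k)) b) :
    HasSum (fun k => f (2 * k + 1)) (a - b) := by
  have ho : Summable fun k => f (2 * k + 1) := hf.summable.comp_injective fun i j h => by omega
  rw [← (he.even_add_odd ho.hasSum).unique hf, add_sub_cancel_left]
  exact ho.hasSum

theorem HasSum.nat_of_int_even {K : Type*} [Field K] [TopologicalSpace K]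
    [IsTopologicalRing K] [NeZero (2 : K)] {f : ℤ → K} {a : K} (hf : HasSum f a)
    (heven : ∀ n, f (-n) = f n) : HasSum (fun n : ℕ => f n) ((a + f 0) / 2) := by
  refine (hf.nat_add_neg.div_const 2).congr_fun fun n => ?_
  rw [heven, ← two_mul, mul_div_cancel_left₀ _ two_ne_zero]

lemma ne_intCast_of_pos_of_lt_one {y : ℝ} (h0 : 0 < y) (h1 : y < 1) (n : ℤ) : y ≠ n := by
  rintro rfl
  have : (0 : ℤ) < n := by exact_mod_cast h0
  have : n < 1 := by exact_mod_cast h1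
  omega

lemma integral_exp_mul_I {a : ℝ} (ha : a ≠ 0) (b : ℝ) :
    ∫ t in (-b)..b, Complex.exp (a * t * Complex.I) = (2 * sin (a * b) / a : ℝ) := by
  have hc : (a : ℂ) * Complex.I ≠ 0 := mul_ne_zero (by exact_mod_cast ha) Complex.I_ne_zero
  simp_rw [mul_right_comm _ _ Complex.I]
  rw [integral_exp_mul_complex hc]
  push_cast
  rw [Complex.sin]
  field_simp
  ring_nf
  rw [Complex.I_sq]
  ring

lemma integral_cos_mul_sq {y : ℝ} (hy : y ≠ 0) (b : ℝ) :
    ∫ t in (-b)..b, cos (y * t) ^ 2 = b + cos (y * b) * sin (y * b) / y := by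
  rw [intervalIntegral.integral_comp_mul_left (fun t => cos t ^ 2) hy, integral_cos_sq,
    mul_neg, cos_neg, sin_neg, smul_eq_mul]
  field_simp
  ring

lemma memLp_cos_mul (y : ℝ) :
    MemLp (fun t : ℝ => (cos (y * t) : ℂ)) 2 (volume.restrict (Set.Ioc (-π) π)) := by
  refine MemLp.of_bound (by fun_prop) 1 (ae_of_all _ fun t => ?_)
  rw [Complex.norm_real, norm_eq_abs]
  exact abs_cos_le_one _

section NonIntegral

variable {y : ℝ}

lemma sin_pi_mul_ne_zero_of_ne_intCast (hy : ∀ n : ℤ, y ≠ n) : sin (π * y) ≠ 0 :=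
  sin_ne_zero_iff.mpr fun n h => hy n (mul_left_cancel₀ pi_ne_zero (by rw [← h, mul_comm]))

lemma sq_sub_intCast_sq_ne_zero (hy : ∀ n : ℤ, y ≠ n) (n : ℤ) : y ^ 2 - (n : ℝ) ^ 2 ≠ 0 := by
  rw [sq_sub_sq]
  refine mul_ne_zero ?_ (sub_ne_zero.mpr (hy n))
  simpa [add_eq_zero_iff_eq_neg] using hy (-n)

lemma fourierCoeffOn_cos_mul (hy : ∀ n : ℤ, y ≠ n) (n : ℤ) :
    fourierCoeffOn (neg_lt_self pi_pos) (fun t => (cos (y * t) : ℂ)) n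
      = ((-1 : ℝ) ^ n * sin (π * y) * y / (π * (y ^ 2 - n ^ 2)) : ℝ) := by
  have hsub : y - n ≠ 0 := sub_ne_zero.mpr (hy n)
  have hadd : -y - n ≠ 0 := by
    rw [← neg_add', neg_ne_zero]
    simpa [add_eq_zero_iff_eq_neg] using hy (-n)
  have hexp : ∀ t : ℝ, fourier (-n) (t : AddCircle (π - -π)) • (cos (y * t) : ℂ)
      = (Complex.exp ((y - n : ℝ) * t * Complex.I)
        + Complex.exp ((-y - n : ℝ) * t * Complex.I)) / 2 := by
    intro t
    rw [fourier_coe_apply, smul_eq_mul, Complex.ofReal_cos, Complex.cos, mul_div_assoc', mul_add,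
      ← Complex.exp_add, ← Complex.exp_add]
    congr 2 <;> congr 1 <;> push_cast <;> field_simp <;> ring
  rw [fourierCoeffOn_eq_integral, intervalIntegral.integral_congr fun t _ => hexp t,
    intervalIntegral.integral_div, intervalIntegral.integral_add
      (Continuous.intervalIntegrable (by fun_prop) _ _)
      (Continuous.intervalIntegrable (by fun_prop) _ _),
    integral_exp_mul_I hsub, integral_exp_mul_I hadd, sub_mul, sub_mul, sin_sub_int_mul_pi,
    sin_sub_int_mul_pi, neg_mul, sin_neg, Complex.real_smul]
  have key : 1 / (π - -π) * ((2 * ((-1) ^ n * sin (y * π)) / (y - n)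
      + 2 * ((-1) ^ n * -sin (y * π)) / (-y - n)) / 2)
      = (-1) ^ n * sin (π * y) * y / (π * (y ^ 2 - n ^ 2)) := by
    have := sq_sub_intCast_sq_ne_zero hy n
    field_simp
    ring
  exact_mod_cast key

theorem hasSum_int_one_div_sq_sub_sq_sq (hy : ∀ n : ℤ, y ≠ n) :
    HasSum (fun n : ℤ => 1 / (y ^ 2 - n ^ 2) ^ 2)
      (π ^ 2 / (2 * y ^ 2 * sin (π * y) ^ 2) + π * cos (π * y) / (2 * y ^ 3 * sin (π * y))) := by
  have hy0 : y ≠ 0 := by simpa using hy 0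
  have hsin := sin_pi_mul_ne_zero_of_ne_intCast hy
  have hsq : ∀ n : ℤ, ((-1 : ℝ) ^ n) ^ 2 = 1 := fun n => by rw [← sq_abs, abs_neg_one_zpow, one_pow]
  have hP := hasSum_sq_fourierCoeffOn (neg_lt_self pi_pos) (memLp_cos_mul y)
  simp only [fourierCoeffOn_cos_mul hy, Complex.norm_real, norm_eq_abs, sq_abs,
    integral_cos_mul_sq hy0, smul_eq_mul] at hP
  rw [← hasSum_mul_left_iff (pow_ne_zero 2 (div_ne_zero (mul_ne_zero hsin hy0) pi_ne_zero))]
  have hval : (sin (π * y) * y / π) ^ 2 * (π ^ 2 / (2 * y ^ 2 * sin (π * y) ^ 2)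
      + π * cos (π * y) / (2 * y ^ 3 * sin (π * y)))
      = (π - -π)⁻¹ * (π + cos (y * π) * sin (y * π) / y) := by
    field_simp
    ring
  refine hval ▸ hP.congr_fun fun n => ?_
  have := sq_sub_intCast_sq_ne_zero hy n
  simp only [div_pow, mul_pow, hsq, one_mul]
  field_simp

theorem hasSum_nat_one_div_sq_sub_sq_sq (hy : ∀ n : ℤ, y ≠ n) :
    HasSum (fun n : ℕ => 1 / (y ^ 2 - n ^ 2) ^ 2)
      ((π ^ 2 / (2 * y ^ 2 * sin (π * y) ^ 2) + π * cos (π * y) / (2 * y ^ 3 * sin (π * y))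
        + 1 / y ^ 4) / 2) := by
  have h := (hasSum_int_one_div_sq_sub_sq_sq hy).nat_of_int_even fun n => by simp
  rw [Int.cast_zero, zero_pow two_ne_zero, sub_zero, ← pow_mul] at h
  exact_mod_cast h

end NonIntegral

theorem hasSum_one_div_odd_sq_sub_sq_sq {x : ℝ} (hx : ∀ n : ℤ, x ≠ n) :
    HasSum (fun n : ℕ => 1 / ((2 * (n : ℝ) + 1) ^ 2 - x ^ 2) ^ 2)
      (π ^ 2 * (1 / cos (π * x / 2)) ^ 2 / (16 * x ^ 2) - π * tan (π * x / 2) / (8 * x ^ 3)) := by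
  have hx2 : ∀ n : ℤ, x / 2 ≠ n := fun n h => hx (2 * n) (by push_cast; linarith)
  have heven := (hasSum_nat_one_div_sq_sub_sq_sq hx2).div_const 16
  have hodd := (hasSum_nat_one_div_sq_sub_sq_sq hx).odd_of_even
    (heven.congr_fun fun k => by push_cast; field_simp; ring)
  have hsin := sin_pi_mul_ne_zero_of_ne_intCast hx
  have hsin2 : sin (π * x) = 2 * sin (π * x / 2) * cos (π * x / 2) := by
    rw [← sin_two_mul]; ring_nf
  have hcos2 : cos (π * x) = 2 * cos (π * x / 2) ^ 2 - 1 := by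
    rw [← cos_two_mul]; ring_nf
  rw [hsin2] at hsin
  have hs : sin (π * x / 2) ≠ 0 := right_ne_zero_of_mul (left_ne_zero_of_mul hsin)
  have hc : cos (π * x / 2) ≠ 0 := right_ne_zero_of_mul hsin
  have hx0 : x ≠ 0 := by simpa using hx 0
  have hval : π ^ 2 * (1 / cos (π * x / 2)) ^ 2 / (16 * x ^ 2) - π * tan (π * x / 2) / (8 * x ^ 3)
      = (π ^ 2 / (2 * x ^ 2 * sin (π * x) ^ 2) + π * cos (π * x) / (2 * x ^ 3 * sin (π * x))
        + 1 / x ^ 4) / 2 - (π ^ 2 / (2 * (x / 2) ^ 2 * sin (π * (x / 2)) ^ 2)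
        + π * cos (π * (x / 2)) / (2 * (x / 2) ^ 3 * sin (π * (x / 2))) + 1 / (x / 2) ^ 4) / 2 / 16 := by
    rw [hsin2, hcos2, tan_eq_sin_div_cos, show π * (x / 2) = π * x / 2 by ring]
    field_simp
    linear_combination (128 * π ^ 2 * x ^ 2 - 256 * π * x * sin (π * x / 2) * cos (π * x / 2))
      * sin_sq_add_cos_sq (π * x / 2)
  exact hval ▸ hodd.congr_fun fun n => by push_cast; ring

/-- For every real `x` with `0 < x < 1`, the series
`∑_{n=0}^∞ 1/((2n+1)² − x²)²` converges and equals
`π²·sec²(πx/2)/(16·x²) − π·tan(πx/2)/(8·x³)`, where `sec θ = 1/cos θ`. -/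
theorem stmt_6 (x : ℝ) (hx0 : 0 < x) (hx1 : x < 1) :
    HasSum (fun n : ℕ => 1 / ((2 * (n : ℝ) + 1) ^ 2 - x ^ 2) ^ 2)
      (π ^ 2 * (1 / Real.cos (π * x / 2)) ^ 2 / (16 * x ^ 2)
        - π * Real.tan (π * x / 2) / (8 * x ^ 3)) :=
  hasSum_one_div_odd_sq_sub_sq_sq (ne_intCast_of_pos_of_lt_one hx0 hx1)
end

section
/- For every γ > 0, every a > 0, and every natural number n, there exists a unique real λ in the open interval (nπ/γ, (n + 1/2)π/γ) such that λ·sin(λγ) = a·cos(λγ). -/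
/-! Substituting `l = (t + nπ)/γ` and using `sin (t + nπ) = (-1)ⁿ sin t`, `cos (t + nπ) = (-1)ⁿ cos t`,
the equation becomes `(t + nπ) sin t = aγ cos t` with `t ∈ (0, π/2)`. On `[0, π/2]` the function
`(t + nπ) sin t - aγ cos t` is strictly increasing (a nondecreasing product plus `-aγ cos t`),
equals `-aγ < 0` at `0` and `nπ + π/2 > 0` at `π/2`; the intermediate value theorem gives the root
and strict monotonicity its uniqueness. -/

open Real Set

theorem StrictMonoOn.existsUnique_mem_Ioo_eq {α δ : Type*} [ConditionallyCompleteLinearOrder α]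
    [TopologicalSpace α] [OrderTopology α] [DenselyOrdered α] [LinearOrder δ] [TopologicalSpace δ]
    [OrderClosedTopology δ] {f : α → δ} {a b : α} {y : δ} (hab : a ≤ b)
    (hmono : StrictMonoOn f (Icc a b)) (hcont : ContinuousOn f (Icc a b))
    (hy : y ∈ Ioo (f a) (f b)) : ∃! x, x ∈ Ioo a b ∧ f x = y := by
  obtain ⟨x, hx, rfl⟩ := intermediate_value_Ioo hab hcont hy
  exact ⟨x, ⟨hx, rfl⟩, fun x' ⟨hx', hfx'⟩ =>
    hmono.injOn (Ioo_subset_Icc_self hx') (Ioo_subset_Icc_self hx) hfx'⟩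

section

variable {b c : ℝ}

theorem strictMonoOn_add_mul_sin_sub_mul_cos (hb : 0 ≤ b) (hc : 0 < c) :
    StrictMonoOn (fun t => (t + b) * sin t - c * cos t) (Icc 0 (π / 2)) := by
  intro s hs t ht hst
  have hsin : sin s ≤ sin t :=
    (strictMonoOn_sin ⟨by linarith [pi_pos, hs.1], hs.2⟩ ⟨by linarith [pi_pos, ht.1], ht.2⟩
      hst).le
  have hcos : cos t < cos s :=
    strictAntiOn_cos ⟨hs.1, by linarith [pi_pos, hs.2]⟩ ⟨ht.1, by linarith [pi_pos, ht.2]⟩ hst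
  have hsin_nonneg : 0 ≤ sin s := sin_nonneg_of_nonneg_of_le_pi hs.1 (by linarith [pi_pos, hs.2])
  have hprod : (s + b) * sin s ≤ (t + b) * sin t :=
    mul_le_mul (by linarith) hsin hsin_nonneg (by linarith [ht.1])
  have := mul_lt_mul_of_pos_left hcos hc
  dsimp only
  linarith

theorem existsUnique_add_mul_sin_eq_mul_cos (hb : 0 ≤ b) (hc : 0 < c) :
    ∃! t, t ∈ Ioo 0 (π / 2) ∧ (t + b) * sin t - c * cos t = 0 := by
  refine (strictMonoOn_add_mul_sin_sub_mul_cos hb hc).existsUnique_mem_Ioo_eq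
    (by positivity) (by fun_prop) ⟨?_, ?_⟩
  · simp [hc]
  · simp only [sin_pi_div_two, cos_pi_div_two]
    linarith [pi_pos]

end

/-- For every `γ > 0`, `a > 0`, and natural number `n`, there exists a unique
real `λ` in the open interval `(nπ/γ, (n + 1/2)π/γ)` such that
`λ·sin(λγ) = a·cos(λγ)`. -/
theorem stmt_13 (γ : ℝ) (hγ : 0 < γ) (a : ℝ) (ha : 0 < a) (n : ℕ) :
    ∃! l : ℝ, l ∈ Ioo ((n : ℝ) * π / γ) (((n : ℝ) + 1/2) * π / γ) ∧
      l * Real.sin (l * γ) = a * Real.cos (l * γ) := by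
  let e : ℝ ≃ ℝ := (Equiv.addRight (n * π)).trans (Equiv.divRight₀ γ hγ.ne')
  refine (e.existsUnique_congr fun t => ?_).1
    (existsUnique_add_mul_sin_eq_mul_cos (b := n * π) (by positivity) (mul_pos ha hγ))
  have he : e t * γ = t + n * π := div_mul_cancel₀ _ hγ.ne'
  rw [he, sin_add_nat_mul_pi, cos_add_nat_mul_pi]
  have hmem : e t ∈ Ioo ((n : ℝ) * π / γ) (((n : ℝ) + 1/2) * π / γ) ↔ t ∈ Ioo 0 (π / 2) := by
    simp only [e, Equiv.trans_apply, Equiv.coe_addRight, Equiv.divRight₀_apply, mem_Ioo,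
      div_lt_div_iff_of_pos_right hγ]
    constructor <;> rintro ⟨h₁, h₂⟩ <;> constructor <;> linarith
  have heq : e t * ((-1) ^ n * sin t) - a * ((-1) ^ n * cos t)
      = (-1) ^ n / γ * ((t + n * π) * sin t - a * γ * cos t) := by
    rw [← he]; field_simp
  rw [hmem, ← sub_eq_zero (a := e t * _), heq, mul_eq_zero]
  simp [hγ.ne']
end
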